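/- arXiv:2306.13159 — 2 statements merged into one kernel-verified Lean document; each statement's English description precedes it below -/
import Mathlib

section
/- If a function f : ℂ → ℂ is continuous on an open set U ⊆ ℂ and complex differentiable at every point of U \ X, where X ⊆ U is a compact countable set all of whose accumulation points lie in X and whose set of accumulation points has exactly n elements for some n ≥ 1 (i.e., X is a Polish space with characteristic system (1, n)), then for every triangle △(z₁, z₂, z₃) contained in U, the integral of f along the closed polygonal path [z₁, z₂, z₃, z₁] equals 0. -/
open Set

/-- The complex line integral of `f` along the segment from `a` to `b`:
`∫_{t ∈ [0,1]} f((1-t)·a + t·b) · (b - a) dt`. -/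
noncomputable def segmentIntegral (f : ℂ → ℂ) (a b : ℂ) : ℂ :=
  ∫ t in (0:ℝ)..1, f ((1 - t) • a + t • b) * (b - a)

/-- The integral of `f` along the closed polygonal path `[z₁, z₂, z₃, z₁]`. -/
noncomputable def triangleIntegral (f : ℂ → ℂ) (z₁ z₂ z₃ : ℂ) : ℂ :=
  segmentIntegral f z₁ z₂ + segmentIntegral f z₂ z₃ + segmentIntegral f z₃ z₁

/-- `w` is an accumulation point of `X`: every neighborhood of `w` contains a
point of `X` other than `w`. -/
def IsAccumulationPoint (w : ℂ) (X : Set ℂ) : Prop :=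
  ∀ V ∈ nhds w, ∃ x, x ∈ V ∩ X ∧ x ≠ w

/-!
A continuous function that is complex differentiable off a countable set is holomorphic: on every
closed disc in `U` the Cauchy integral formula, which tolerates a countable exceptional set,
represents it by a power series. For holomorphic `f` the argument is Goursat's: joining the
midpoints of the sides writes a triangle integral as the sum of four integrals over triangles of
half the size, so it suffices to treat triangles small enough to lie in a disc inside `U`, where `f`
has a primitive.
-/

open Metric

section SegmentIntegral

lemma intervalIntegral_eq_segmentIntegral (f : ℂ → ℂ) (a b : ℂ) (u v : ℝ) :
    ∫ t in u..v, f ((1 - t) • a + t • b) * (b - a) =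
      segmentIntegral f ((1 - u) • a + u • b) ((1 - v) • a + v • b) := by
  have h := intervalIntegral.smul_integral_comp_add_mul
    (fun t : ℝ ↦ f ((1 - t) • a + t • b) * (b - a)) (a := 0) (b := 1) (v - u) u
  rw [mul_zero, add_zero, mul_one, add_sub_cancel] at h
  rw [← h, segmentIntegral, ← intervalIntegral.integral_smul]
  refine intervalIntegral.integral_congr fun s _ ↦ ?_
  simp only [Complex.real_smul]
  push_cast
  ring_nf

lemma segmentIntegral_swap (f : ℂ → ℂ) (a b : ℂ) :
    segmentIntegral f b a = -segmentIntegral f a b := by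
  have h := intervalIntegral_eq_segmentIntegral f a b 1 0
  simp only [sub_self, zero_smul, one_smul, zero_add, sub_zero, add_zero] at h
  rw [← h, intervalIntegral.integral_symm]
  rfl

variable {f : ℂ → ℂ} {a b c : ℂ}

lemma continuousOn_comp_segment (hf : ContinuousOn f (segment ℝ a b)) :
    ContinuousOn (fun t : ℝ ↦ f ((1 - t) • a + t • b)) (Icc 0 1) := by
  refine hf.comp (by fun_prop) fun t ht ↦ ?_
  rw [segment_eq_image]
  exact ⟨t, ht, rfl⟩

lemma segmentIntegral_eq_add_midpoint (hf : ContinuousOn f (segment ℝ a b)) :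
    segmentIntegral f a b =
      segmentIntegral f a (midpoint ℝ a b) + segmentIntegral f (midpoint ℝ a b) b := by
  have hint : ∀ u ∈ Icc (0 : ℝ) 1, ∀ v ∈ Icc (0 : ℝ) 1,
      IntervalIntegrable (fun t : ℝ ↦ f ((1 - t) • a + t • b) * (b - a)) MeasureTheory.volume u v :=
    fun u hu v hv ↦ (((continuousOn_comp_segment hf).mono
      (ordConnected_Icc.uIcc_subset hu hv)).mul continuousOn_const).intervalIntegrable
  have hmid : midpoint ℝ a b = (1 - 2⁻¹ : ℝ) • a + (2⁻¹ : ℝ) • b := by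
    rw [midpoint, AffineMap.lineMap_apply_module, invOf_eq_inv]
  have h := intervalIntegral.integral_add_adjacent_intervals
    (hint 0 (by norm_num) 2⁻¹ (by norm_num)) (hint 2⁻¹ (by norm_num) 1 (by norm_num))
  rw [intervalIntegral_eq_segmentIntegral, intervalIntegral_eq_segmentIntegral,
    intervalIntegral_eq_segmentIntegral, ← hmid] at h
  simpa using h.symm

lemma segmentIntegral_eq_sub_of_hasDerivAt {g : ℂ → ℂ}
    (hg : ∀ z ∈ segment ℝ a b, HasDerivAt g (f z) z) (hf : ContinuousOn f (segment ℝ a b)) :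
    segmentIntegral f a b = g b - g a := by
  have hmem : ∀ t ∈ Icc (0 : ℝ) 1, (1 - t) • a + t • b ∈ segment ℝ a b := fun t ht ↦ by
    rw [segment_eq_image]
    exact ⟨t, ht, rfl⟩
  have hline : ∀ t : ℝ, HasDerivAt (fun t : ℝ ↦ (1 - t) • a + t • b) (b - a) t := fun t ↦ by
    have h := ((hasDerivAt_id t).smul_const (b - a)).const_add a
    rw [one_smul] at h
    refine h.congr_of_eventuallyEq (.of_forall fun s ↦ ?_)
    simp only [Complex.real_smul, id]
    push_cast
    ring
  have h := intervalIntegral.integral_eq_sub_of_hasDerivAt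
    (f := fun t : ℝ ↦ g ((1 - t) • a + t • b)) (a := 0) (b := 1)
    (fun t ht ↦ by
      rw [uIcc_of_le zero_le_one] at ht
      rw [mul_comm, ← smul_eq_mul]
      exact (hg _ (hmem t ht)).scomp t (hline t))
    (((continuousOn_comp_segment hf).mul continuousOn_const).intervalIntegrable_of_Icc
      zero_le_one)
  simp only [sub_zero, one_smul, zero_smul, add_zero, sub_self, zero_add] at h
  exact h

lemma triangleIntegral_eq_zero_of_hasDerivAt {g : ℂ → ℂ}
    (hg : ∀ z ∈ convexHull ℝ {a, b, c}, HasDerivAt g (f z) z)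
    (hf : ContinuousOn f (convexHull ℝ {a, b, c})) :
    triangleIntegral f a b c = 0 := by
  have hseg : ∀ x ∈ ({a, b, c} : Set ℂ), ∀ y ∈ ({a, b, c} : Set ℂ),
      segment ℝ x y ⊆ convexHull ℝ {a, b, c} :=
    fun x hx y hy ↦ segment_subset_convexHull hx hy
  rw [triangleIntegral,
    segmentIntegral_eq_sub_of_hasDerivAt (fun z hz ↦ hg z (hseg a (by simp) b (by simp) hz))
      (hf.mono (hseg a (by simp) b (by simp))),
    segmentIntegral_eq_sub_of_hasDerivAt (fun z hz ↦ hg z (hseg b (by simp) c (by simp) hz))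
      (hf.mono (hseg b (by simp) c (by simp))),
    segmentIntegral_eq_sub_of_hasDerivAt (fun z hz ↦ hg z (hseg c (by simp) a (by simp) hz))
      (hf.mono (hseg c (by simp) a (by simp)))]
  ring

lemma triangleIntegral_eq_add_midpoints (hf : ContinuousOn f (convexHull ℝ {a, b, c})) :
    triangleIntegral f a b c =
      triangleIntegral f a (midpoint ℝ a b) (midpoint ℝ c a)
        + triangleIntegral f (midpoint ℝ a b) b (midpoint ℝ b c)
        + triangleIntegral f (midpoint ℝ c a) (midpoint ℝ b c) c
        + triangleIntegral f (midpoint ℝ a b) (midpoint ℝ b c) (midpoint ℝ c a) := by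
  have hseg : ∀ x ∈ ({a, b, c} : Set ℂ), ∀ y ∈ ({a, b, c} : Set ℂ),
      ContinuousOn f (segment ℝ x y) :=
    fun x hx y hy ↦ hf.mono (segment_subset_convexHull hx hy)
  simp only [triangleIntegral]
  rw [segmentIntegral_eq_add_midpoint (hseg a (by simp) b (by simp)),
    segmentIntegral_eq_add_midpoint (hseg b (by simp) c (by simp)),
    segmentIntegral_eq_add_midpoint (hseg c (by simp) a (by simp)),
    segmentIntegral_swap f (midpoint ℝ c a) (midpoint ℝ a b),
    segmentIntegral_swap f (midpoint ℝ a b) (midpoint ℝ b c),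
    segmentIntegral_swap f (midpoint ℝ b c) (midpoint ℝ c a)]
  ring

end SegmentIntegral

section Goursat

variable {f : ℂ → ℂ}

lemma dist_le_of_sub_eq_half {x y p q : ℂ} {r : ℝ} (h : x - y = (p - q) / 2)
    (hpq : dist p q ≤ 2 * r) : dist x y ≤ r := by
  rw [dist_eq_norm, h, norm_div, ← dist_eq_norm, Complex.norm_two]
  linarith

lemma midpoint_real_eq (x y : ℂ) : midpoint ℝ x y = (x + y) / 2 := by
  rw [midpoint_eq_smul_add, invOf_eq_inv, Complex.real_smul]
  push_cast
  ring

def TriangleIntegralsVanish (f : ℂ → ℂ) (K : Set ℂ) (r : ℝ) : Prop :=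
  ∀ a ∈ K, ∀ b ∈ K, ∀ c ∈ K, dist a b ≤ r → dist b c ≤ r → dist c a ≤ r →
    triangleIntegral f a b c = 0

lemma TriangleIntegralsVanish.two_mul {K : Set ℂ} (hK : Convex ℝ K) (hf : ContinuousOn f K)
    {r : ℝ} (h : TriangleIntegralsVanish f K r) : TriangleIntegralsVanish f K (2 * r) := by
  intro a ha b hb c hc hab hbc hca
  have hmem : ∀ x ∈ K, ∀ y ∈ K, (x + y) / 2 ∈ K := fun x hx y hy ↦
    midpoint_real_eq x y ▸ hK.midpoint_mem hx hy
  have hba : dist b a ≤ 2 * r := dist_comm a b ▸ hab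
  have hcb : dist c b ≤ 2 * r := dist_comm b c ▸ hbc
  have hac : dist a c ≤ 2 * r := dist_comm c a ▸ hca
  rw [triangleIntegral_eq_add_midpoints
    (hf.mono (convexHull_min (by simp [insert_subset_iff, ha, hb, hc]) hK))]
  simp only [midpoint_real_eq]
  rw [h _ ha _ (hmem a ha b hb) _ (hmem c hc a ha) ?_ ?_ ?_,
    h _ (hmem a ha b hb) _ hb _ (hmem b hb c hc) ?_ ?_ ?_,
    h _ (hmem c hc a ha) _ (hmem b hb c hc) _ hc ?_ ?_ ?_,
    h _ (hmem a ha b hb) _ (hmem b hb c hc) _ (hmem c hc a ha) ?_ ?_ ?_]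
  · simp
  -- each side of a subtriangle is half a side of `a b c`
  all_goals first
    | (refine dist_le_of_sub_eq_half ?_ hab; ring1) | (refine dist_le_of_sub_eq_half ?_ hba; ring1)
    | (refine dist_le_of_sub_eq_half ?_ hbc; ring1) | (refine dist_le_of_sub_eq_half ?_ hcb; ring1)
    | (refine dist_le_of_sub_eq_half ?_ hca; ring1) | (refine dist_le_of_sub_eq_half ?_ hac; ring1)

lemma TriangleIntegralsVanish.of_pos_scale {K : Set ℂ} (hK : Convex ℝ K) (hf : ContinuousOn f K)
    {ρ : ℝ} (hρ : 0 < ρ) (h : TriangleIntegralsVanish f K ρ) (r : ℝ) :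
    TriangleIntegralsVanish f K r := by
  have hpow : ∀ n : ℕ, TriangleIntegralsVanish f K (2 ^ n * ρ) := by
    intro n
    induction n with
    | zero => simpa using h
    | succ n ih => simpa only [pow_succ', mul_assoc] using ih.two_mul hK hf
  obtain ⟨k, hk⟩ := pow_unbounded_of_one_lt (r / ρ) one_lt_two
  have hr : r ≤ 2 ^ k * ρ := ((div_lt_iff₀ hρ).1 hk).le
  intro a ha b hb c hc hab hbc hca
  exact hpow k a ha b hb c hc (hab.trans hr) (hbc.trans hr) (hca.trans hr)

theorem triangleIntegral_eq_zero_of_differentiableOn {U : Set ℂ} (hU : IsOpen U)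
    (hf : DifferentiableOn ℂ f U) {a b c : ℂ} (habc : convexHull ℝ {a, b, c} ⊆ U) :
    triangleIntegral f a b c = 0 := by
  set K := convexHull ℝ {a, b, c}
  have hKf : ContinuousOn f K := hf.continuousOn.mono habc
  have hKc : IsCompact K := (toFinite _).isCompact_convexHull ℝ
  obtain ⟨δ, hδ, hδU⟩ := hKc.exists_thickening_subset_open hU habc
  -- triangles with sides at most `δ / 2` lie in a disc in `U`, where `f` has a primitive
  have hsmall : TriangleIntegralsVanish f K (δ / 2) := by
    intro x hx y hy z hz hxy _ hzx
    have hball : ball x δ ⊆ U := (ball_subset_thickening hx δ).trans hδU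
    obtain ⟨g, hg⟩ := (hf.mono hball).isExactOn_ball
    have hsub : convexHull ℝ {x, y, z} ⊆ ball x δ := by
      refine convexHull_min ?_ (convex_ball x δ)
      simp only [insert_subset_iff, singleton_subset_iff, mem_ball, dist_self]
      exact ⟨hδ, by rw [dist_comm]; linarith, by linarith⟩
    exact triangleIntegral_eq_zero_of_hasDerivAt (fun w hw ↦ hg w (hsub hw))
      (hf.continuousOn.mono (hsub.trans hball))
  have hvert : ∀ x ∈ ({a, b, c} : Set ℂ), x ∈ K := fun x hx ↦ subset_convexHull ℝ _ hx
  exact hsmall.of_pos_scale (convex_convexHull ℝ _) hKf (half_pos hδ)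
    (max (dist a b) (max (dist b c) (dist c a)))
    a (hvert a (by simp)) b (hvert b (by simp)) c (hvert c (by simp))
    (le_max_left _ _) ((le_max_left _ _).trans (le_max_right _ _))
    ((le_max_right _ _).trans (le_max_right _ _))

end Goursat

theorem ContinuousOn.differentiableOn_of_differentiableAt_off_countable {f : ℂ → ℂ}
    {U X : Set ℂ} (hf : ContinuousOn f U) (hU : IsOpen U) (hX : X.Countable)
    (hd : ∀ z ∈ U \ X, DifferentiableAt ℂ f z) : DifferentiableOn ℂ f U := by
  intro z hz
  obtain ⟨R, hR, hRU⟩ := nhds_basis_closedBall.mem_iff.1 (hU.mem_nhds hz)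
  lift R to NNReal using hR.le
  exact (Complex.hasFPowerSeriesOnBall_of_differentiable_off_countable hX (hf.mono hRU)
    (fun w hw ↦ hd w ⟨hRU (ball_subset_closedBall hw.1), hw.2⟩)
    hR).hasFPowerSeriesAt.differentiableAt.differentiableWithinAt

theorem stmt_2_general (f : ℂ → ℂ) (U : Set ℂ) (hU : IsOpen U)
    (hf : ContinuousOn f U) (X : Set ℂ) (hXcount : X.Countable)
    (hd : ∀ z ∈ U \ X, DifferentiableAt ℂ f z)
    (z₁ z₂ z₃ : ℂ) (htri : convexHull ℝ {z₁, z₂, z₃} ⊆ U) :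
    triangleIntegral f z₁ z₂ z₃ = 0 :=
  triangleIntegral_eq_zero_of_differentiableOn hU
    (hf.differentiableOn_of_differentiableAt_off_countable hU hXcount hd) htri

theorem stmt_2 (f : ℂ → ℂ) (U : Set ℂ) (hU : IsOpen U)
    (hf : ContinuousOn f U) (X : Set ℂ) (hXU : X ⊆ U)
    (hXcomp : IsCompact X) (hXcount : X.Countable)
    (hacc : {w | IsAccumulationPoint w X} ⊆ X)
    (n : ℕ) (hn : 1 ≤ n) (hcard : {w | IsAccumulationPoint w X}.ncard = n)
    (hd : ∀ z ∈ U \ X, DifferentiableAt ℂ f z)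
    (z₁ z₂ z₃ : ℂ) (htri : convexHull ℝ {z₁, z₂, z₃} ⊆ U) :
    triangleIntegral f z₁ z₂ z₃ = 0 :=
  stmt_2_general f U hU hf X hXcount hd z₁ z₂ z₃ htri
end

section
/- Let z₁, z₂, z₃ ∈ ℂ be non-collinear points and let v be a point of the triangle △(z₁, z₂, z₃) with v ≠ z₁. Then the straight line through z₁ and v intersects the segment [z₂, z₃] in exactly one point. -/
open Set

/-- The straight line through two points `a, b ∈ ℂ`:
the set `{(1-t)·a + t·b : t ∈ ℝ}`. -/
def lineThrough (a b : ℂ) : Set ℂ :=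
  {p | ∃ t : ℝ, p = (1 - t) • a + t • b}

lemma collinear_lineThrough (a b : ℂ) : Collinear ℝ (lineThrough a b) := by
  rw [collinear_iff_of_mem (show a ∈ lineThrough a b from ⟨0, by simp⟩)]
  refine ⟨b - a, ?_⟩
  rintro p ⟨t, rfl⟩
  refine ⟨t, ?_⟩
  simp only [Complex.real_smul, vadd_eq_add]
  push_cast
  ring

theorem stmt_10 (z₁ z₂ z₃ : ℂ)
    (hncol : ¬ Collinear ℝ ({z₁, z₂, z₃} : Set ℂ))
    (v : ℂ) (hv : v ∈ convexHull ℝ ({z₁, z₂, z₃} : Set ℂ)) (hvz : v ≠ z₁) :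
    ∃! p, p ∈ lineThrough z₁ v ∩ convexHull ℝ ({z₂, z₃} : Set ℂ) := by
  have hpair : convexHull ℝ ({z₂, z₃} : Set ℂ) = segment ℝ z₂ z₃ := convexHull_pair _ _
  -- Uniqueness: any two points of the intersection coincide.
  have key : ∀ p q : ℂ, p ∈ lineThrough z₁ v ∩ convexHull ℝ ({z₂, z₃} : Set ℂ) →
      q ∈ lineThrough z₁ v ∩ convexHull ℝ ({z₂, z₃} : Set ℂ) → p = q := by
    rintro p q ⟨⟨t, hp⟩, hps⟩ ⟨⟨t', hq⟩, hqs⟩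
    by_contra hpq
    rw [hpair, segment_eq_image] at hps hqs
    obtain ⟨u, -, hpu⟩ := hps
    obtain ⟨u', -, hqu⟩ := hqs
    have htne : (t : ℂ) ≠ (t' : ℂ) := by
      intro h
      apply hpq
      rw [hp, hq]
      norm_cast at h
      rw [h]
    have hune : (u : ℂ) ≠ (u' : ℂ) := by
      intro h
      apply hpq
      rw [← hpu, ← hqu]
      norm_cast at h
      rw [h]
    have htd : (t : ℂ) - t' ≠ 0 := sub_ne_zero.mpr htne
    have hud : (u : ℂ) - u' ≠ 0 := sub_ne_zero.mpr hune
    apply hncol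
    refine (collinear_lineThrough p q).subset ?_
    intro z hz
    simp only [mem_insert_iff, mem_singleton_iff] at hz
    simp only [lineThrough, mem_setOf_eq, Complex.real_smul]
    rcases hz with rfl | rfl | rfl
    · refine ⟨t / (t - t'), ?_⟩
      rw [hp, hq]
      simp only [Complex.real_smul]
      push_cast
      field_simp
      ring
    · refine ⟨u / (u - u'), ?_⟩
      rw [← hpu, ← hqu]
      simp only [Complex.real_smul]
      push_cast
      field_simp
      ring
    · refine ⟨(u - 1) / (u - u'), ?_⟩
      rw [← hpu, ← hqu]
      simp only [Complex.real_smul]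
      push_cast
      field_simp
      ring
  -- Existence
  rw [show ({z₁, z₂, z₃} : Set ℂ) = insert z₁ {z₂, z₃} from rfl,
    convexHull_insert (by simp : ({z₂, z₃} : Set ℂ).Nonempty)] at hv
  rw [mem_convexJoin] at hv
  obtain ⟨x, hx, w, hw, hvw⟩ := hv
  rw [mem_singleton_iff] at hx
  rw [hx] at hvw
  rw [segment_eq_image] at hvw
  obtain ⟨b, ⟨hb0, hb1⟩, hvb⟩ := hvw
  have hbne : b ≠ 0 := by
    rintro rfl
    apply hvz
    simpa using hvb.symm
  have hwline : w ∈ lineThrough z₁ v := by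
    refine ⟨1 / b, ?_⟩
    rw [← hvb]
    simp only [Complex.real_smul]
    have hbc : (b : ℂ) ≠ 0 := by exact_mod_cast hbne
    push_cast
    field_simp
    ring
  exact ⟨w, ⟨hwline, hw⟩, fun y hy => key y w hy ⟨hwline, hw⟩⟩
end
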